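/- Let F : ℝ³ → ℝ be differentiable and satisfy condition (F9). Then F is strictly convex on ℝ³. -/

import Mathlib

/-!
At `t = 1`, condition (F9) says that every tangent plane of `F` lies strictly below the graph
away from its point of contact. A function with such strict supporting hyperplanes is strictly
convex: at `z = a • x + b • y` the linear terms of the two supporting inequalities at `x` and
`y` cancel, since `a • (x - z) + b • (y - z) = 0`.
-/

open RealInnerProductSpace

noncomputable section

/-- Condition (F9) for a differentiable `F : ℝ³ → ℝ` with gradient `f = ∇F`:
`((t²−1)/2)⟨f(u),u⟩ + t⟨f(u),v⟩ + F(u) − F(tu+v) ≤ 0` for all `t ≥ 0`, `u, v ∈ ℝ³`,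
with strict inequality whenever `u ≠ tu + v`. -/
def CondF9 (F : EuclideanSpace ℝ (Fin 3) → ℝ) : Prop :=
  ∀ t : ℝ, 0 ≤ t → ∀ u v : EuclideanSpace ℝ (Fin 3),
    (t ^ 2 - 1) / 2 * ⟪gradient F u, u⟫ + t * ⟪gradient F u, v⟫ + F u - F (t • u + v) ≤ 0 ∧
    (u ≠ t • u + v →
      (t ^ 2 - 1) / 2 * ⟪gradient F u, u⟫ + t * ⟪gradient F u, v⟫ + F u - F (t • u + v) < 0)

section SupportingHyperplane

variable {𝕜 E : Type*} [Field 𝕜] [LinearOrder 𝕜] [IsStrictOrderedRing 𝕜]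
  [AddCommGroup E] [Module 𝕜 E]

theorem strictConvexOn_of_lt_add_apply_sub {s : Set E} (hs : Convex 𝕜 s) {f : E → 𝕜}
    (φ : E → E →ₗ[𝕜] 𝕜) (hφ : ∀ z ∈ s, ∀ w ∈ s, w ≠ z → f z + φ z (w - z) < f w) :
    StrictConvexOn 𝕜 s f := by
  refine ⟨hs, fun x hx y hy hxy a b ha hb hab => ?_⟩
  obtain rfl : b = 1 - a := by linarith
  set z := a • x + (1 - a) • y
  have hz : z ∈ s := hs hx hy ha.le hb.le (by ring)
  have hxz : x ≠ z := by
    rw [ne_comm, ← sub_ne_zero, show z - x = (1 - a) • (y - x) by module]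
    exact smul_ne_zero hb.ne' (sub_ne_zero.2 hxy.symm)
  have hyz : y ≠ z := by
    rw [ne_comm, ← sub_ne_zero, show z - y = a • (x - y) by module]
    exact smul_ne_zero ha.ne' (sub_ne_zero.2 hxy)
  have hcancel : a * φ z (x - z) + (1 - a) * φ z (y - z) = 0 := by
    have : a • (x - z) + (1 - a) • (y - z) = 0 := by module
    simpa only [map_add, map_smul, smul_eq_mul, map_zero] using congrArg (φ z) this
  have h₁ := mul_lt_mul_of_pos_left (hφ z hz x hx hxz) ha
  have h₂ := mul_lt_mul_of_pos_left (hφ z hz y hy hyz) hb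
  simp only [smul_eq_mul]
  linear_combination h₁ + h₂ - hcancel

end SupportingHyperplane

theorem CondF9.lt_add_inner_gradient {F : EuclideanSpace ℝ (Fin 3) → ℝ} (hF9 : CondF9 F)
    {z w : EuclideanSpace ℝ (Fin 3)} (hw : w ≠ z) :
    F z + ⟪gradient F z, w - z⟫ < F w := by
  have h := (hF9 1 zero_le_one z (w - z)).2 (by rwa [one_smul, add_sub_cancel, ne_comm])
  rw [one_smul, add_sub_cancel] at h
  linarith

theorem statement11_general (F : EuclideanSpace ℝ (Fin 3) → ℝ)
    (hF9 : CondF9 F) :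
    StrictConvexOn ℝ Set.univ F :=
  strictConvexOn_of_lt_add_apply_sub convex_univ (fun z => innerₛₗ ℝ (gradient F z))
    fun _ _ _ _ hw => hF9.lt_add_inner_gradient hw

/-- (cf. Remark 5.4 c)).
If `F : ℝ³ → ℝ` is differentiable and satisfies (F9), then `F` is strictly convex. -/
theorem statement11 (F : EuclideanSpace ℝ (Fin 3) → ℝ) (hF : Differentiable ℝ F)
    (hF9 : CondF9 F) :
    StrictConvexOn ℝ Set.univ F :=
  statement11_general F hF9

end
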